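/- arXiv:1306.0529 — 2 statements merged into one kernel-verified Lean document; each statement's English description precedes it below -/
import Mathlib

section
/- Let n ≥ 2 and let π⁺, π⁻ be subsets of the simple roots π of sl_n with π⁺ ∪ π⁻ = π. Then both R and R_* are additively closed in Δ: if α, β ∈ R and α + β ∈ Δ, then α + β ∈ R; and if α, β ∈ R_* and α + β ∈ Δ, then α + β ∈ R_*. (Claims of Section 1.8, used in the proofs of Corollaries 3.8.4 and 4.3.2.) -/
open Pointwise

noncomputable def eps (n : ℕ) (i : Fin n) : Fin n → ℝ := Pi.single i 1

/-- The roots of `sl_n`: `ε_i - ε_j` for `i ≠ j`. -/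
def Delta (n : ℕ) : Set (Fin n → ℝ) :=
  {v | ∃ i j : Fin n, i ≠ j ∧ v = eps n i - eps n j}

/-- The positive roots: `ε_i - ε_j` for `i < j`. -/
def DeltaPos (n : ℕ) : Set (Fin n → ℝ) :=
  {v | ∃ i j : Fin n, i < j ∧ v = eps n i - eps n j}

/-- The negative roots. -/
def DeltaNeg (n : ℕ) : Set (Fin n → ℝ) := -DeltaPos n

/-- The simple roots `α_i = ε_i - ε_{i+1}`. -/
def simpleRoots (n : ℕ) : Set (Fin n → ℝ) :=
  {v | ∃ i j : Fin n, (j : ℕ) = (i : ℕ) + 1 ∧ v = eps n i - eps n j}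

/-- The set of ℕ-linear combinations of elements of `S`. -/
def Nspan {n : ℕ} (S : Set (Fin n → ℝ)) : Set (Fin n → ℝ) :=
  (AddSubmonoid.closure S : AddSubmonoid (Fin n → ℝ))

/-- `R = (ℕπ⁺ ∪ (−ℕπ⁻)) ∩ Δ`. -/
def Rset (n : ℕ) (Pp Pm : Set (Fin n → ℝ)) : Set (Fin n → ℝ) :=
  (Nspan Pp ∪ -Nspan Pm) ∩ Delta n

/-- `K = Δ \ R`. -/
def Kset (n : ℕ) (Pp Pm : Set (Fin n → ℝ)) : Set (Fin n → ℝ) :=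
  Delta n \ Rset n Pp Pm

/-- `M = R ∩ (−R)`. -/
def Mset (n : ℕ) (Pp Pm : Set (Fin n → ℝ)) : Set (Fin n → ℝ) :=
  Rset n Pp Pm ∩ -Rset n Pp Pm

/-- `R_* = (−R) \ M`. -/
def RstarSet (n : ℕ) (Pp Pm : Set (Fin n → ℝ)) : Set (Fin n → ℝ) :=
  -Rset n Pp Pm \ Mset n Pp Pm

/-!
A set `X ⊆ Δ` amounts to the relation `i ~ j ↔ ε_i - ε_j ∈ X` on indices, and since
`(ε_a - ε_b) + (ε_c - ε_d)` is a root only when `b = c` or `a = d`, `X` is additively closed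
in `Δ` as soon as `~` is transitive on distinct indices. Transitivity of `X` passes to
`-X \ X`, which is `R_*`. For `R`, a root `ε_i - ε_j` with `i < j` lies in `ℕS`, `S ⊆ π`,
exactly when `α_k ∈ S` for all `i ≤ k < j`: the partial sum `v ↦ v_0 + ⋯ + v_k` is
nonnegative on `ℕπ`, vanishes on `ℕS` when `α_k ∉ S`, and equals `1` on `ε_i - ε_j`. So
`i ~ j` says that the simple roots between `i` and `j` lie in `π⁺` or in `π⁻`, according to
the direction, and such interval conditions compose.
-/

variable {n : ℕ}

lemma eps_sub_eps_ne_zero {i j : Fin n} (hij : i ≠ j) : eps n i - eps n j ≠ 0 := by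
  intro h
  simpa [eps, hij] using congrFun h i

lemma zero_notMem_Delta : (0 : Fin n → ℝ) ∉ Delta n := by
  rintro ⟨i, j, hij, h⟩
  exact eps_sub_eps_ne_zero hij h.symm

lemma neg_Delta : -Delta n = Delta n := by
  ext v
  constructor
  · rintro ⟨i, j, hij, h⟩
    exact ⟨j, i, hij.symm, by rw [← neg_neg v, h, neg_sub]⟩
  · rintro ⟨i, j, hij, rfl⟩
    exact ⟨j, i, hij.symm, neg_sub _ _⟩

lemma eq_or_eq_of_eps_sub_add_eps_sub_mem_Delta {a b c d : Fin n} (hab : a ≠ b) (hcd : c ≠ d)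
    (h : eps n a - eps n b + (eps n c - eps n d) ∈ Delta n) : b = c ∨ a = d := by
  obtain ⟨p, q, -, h⟩ := h
  by_contra! hne
  have ha := congrFun h a
  have hb := congrFun h b
  have hc := congrFun h c
  simp only [eps, Pi.add_apply, Pi.sub_apply, Pi.single_apply] at ha hb hc
  grind

def IsClosedUnderRootAdd (X : Set (Fin n → ℝ)) : Prop :=
  ∀ α β : Fin n → ℝ, α ∈ X → β ∈ X → α + β ∈ Delta n → α + β ∈ X

def IsEpsTransitive (X : Set (Fin n → ℝ)) : Prop :=
  ∀ a b d : Fin n, a ≠ d → eps n a - eps n b ∈ X → eps n b - eps n d ∈ X →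
    eps n a - eps n d ∈ X

namespace IsEpsTransitive

variable {X : Set (Fin n → ℝ)}

theorem isClosedUnderRootAdd (hX : X ⊆ Delta n) (ht : IsEpsTransitive X) :
    IsClosedUnderRootAdd X := by
  intro α β hα hβ hαβ
  obtain ⟨a, b, hab, rfl⟩ := hX hα
  obtain ⟨c, d, hcd, rfl⟩ := hX hβ
  rcases eq_or_eq_of_eps_sub_add_eps_sub_mem_Delta hab hcd hαβ with rfl | rfl
  · rw [sub_add_sub_cancel] at hαβ ⊢
    exact ht a b d (fun had => zero_notMem_Delta (by rwa [had, sub_self] at hαβ)) hα hβ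
  · rw [add_comm, sub_add_sub_cancel] at hαβ ⊢
    exact ht c a b (fun hcb => zero_notMem_Delta (by rwa [hcb, sub_self] at hαβ)) hβ hα

theorem neg_sdiff (hX : X ⊆ Delta n) (ht : IsEpsTransitive X) : IsEpsTransitive (-X \ X) := by
  rintro a b d had ⟨hab, hab'⟩ ⟨hbd, -⟩
  rw [Set.mem_neg, neg_sub] at hab hbd
  have hne : a ≠ b := by
    rintro rfl
    exact zero_notMem_Delta (sub_self (eps n a) ▸ hX hab)
  refine ⟨?_, fun had' => hab' (ht a d b hne had' hbd)⟩
  rw [Set.mem_neg, neg_sub]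
  exact ht d b a had.symm hbd hab

end IsEpsTransitive

noncomputable def partialSum (k : Fin n) : (Fin n → ℝ) →+ ℝ :=
  ∑ m ∈ Finset.Iic k, Pi.evalAddMonoidHom (fun _ => ℝ) m

lemma partialSum_eps (k i : Fin n) : partialSum k (eps n i) = if i ≤ k then 1 else 0 := by
  simp [partialSum, AddMonoidHom.finsetSum_apply, eps, Finset.sum_pi_single']

lemma partialSum_simpleRoot {k i j : Fin n} (hij : (j : ℕ) = i + 1) :
    partialSum k (eps n i - eps n j) = if i = k then 1 else 0 := by
  rw [map_sub, partialSum_eps, partialSum_eps]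
  split_ifs <;> simp only [Fin.le_def, Fin.ext_iff] at * <;> first | omega | norm_num

lemma partialSum_nonneg {S : Set (Fin n → ℝ)} (hS : S ⊆ simpleRoots n) (k : Fin n)
    {v : Fin n → ℝ} (hv : v ∈ Nspan S) : 0 ≤ partialSum k v := by
  refine (AddSubmonoid.closure_le (S := (AddSubmonoid.nonneg ℝ).comap (partialSum k))).2
    (fun w hw => ?_) hv
  obtain ⟨i, j, hij, rfl⟩ := hS hw
  simp only [AddSubmonoid.coe_comap, Set.mem_preimage, SetLike.mem_coe,
    AddSubmonoid.mem_nonneg, partialSum_simpleRoot hij]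
  split_ifs <;> norm_num

lemma partialSum_eq_zero {S : Set (Fin n → ℝ)} (hS : S ⊆ simpleRoots n) {k l : Fin n}
    (hkl : (l : ℕ) = k + 1) (hk : eps n k - eps n l ∉ S)
    {v : Fin n → ℝ} (hv : v ∈ Nspan S) : partialSum k v = 0 := by
  refine (AddSubmonoid.closure_le (S := AddMonoidHom.mker (partialSum k))).2 (fun w hw => ?_) hv
  obtain ⟨i, j, hij, rfl⟩ := hS hw
  have hik : i ≠ k := by
    rintro rfl
    exact hk (Fin.ext (hkl.trans hij.symm) ▸ hw)
  simp [AddMonoidHom.mem_mker, partialSum_simpleRoot hij, hik]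

def HasSimpleRootsBetween (S : Set (Fin n → ℝ)) (i j : Fin n) : Prop :=
  ∀ k l : Fin n, i ≤ k → l ≤ j → (l : ℕ) = k + 1 → eps n k - eps n l ∈ S

namespace HasSimpleRootsBetween

variable {S : Set (Fin n → ℝ)} {i j : Fin n}

theorem mono {i' j' : Fin n} (h : HasSimpleRootsBetween S i j) (hi : i ≤ i') (hj : j' ≤ j) :
    HasSimpleRootsBetween S i' j' :=
  fun k l hk hl => h k l (hi.trans hk) (hl.trans hj)

theorem trans {m : Fin n} (hij : HasSimpleRootsBetween S i j)
    (hjm : HasSimpleRootsBetween S j m) : HasSimpleRootsBetween S i m := by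
  intro k l hk hl hkl
  rcases le_or_gt l j with hlj | hjl
  · exact hij k l hk hlj hkl
  · exact hjm k l (by omega) hl hkl

end HasSimpleRootsBetween

lemma eps_sub_eps_mem_Nspan {S : Set (Fin n → ℝ)} {i j : Fin n} (hij : i ≤ j)
    (h : HasSimpleRootsBetween S i j) : eps n i - eps n j ∈ Nspan S := by
  obtain ⟨m, hm⟩ := Nat.exists_eq_add_of_le (Fin.le_def.1 hij)
  induction m generalizing j with
  | zero => rw [Fin.ext hm, sub_self]; exact zero_mem _
  | succ m ih =>
    let j' : Fin n := ⟨i + m, by omega⟩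
    have hij' : i ≤ j' := by simp [Fin.le_def, j']
    have hj'j : j' ≤ j := by simp [Fin.le_def, j']; omega
    rw [← sub_add_sub_cancel _ (eps n j')]
    exact add_mem (ih hij' (h.mono le_rfl hj'j) rfl)
      (AddSubmonoid.subset_closure (h j' j hij' le_rfl (by simp [j']; omega)))

lemma eps_sub_eps_mem_Nspan_iff {S : Set (Fin n → ℝ)} (hS : S ⊆ simpleRoots n) {i j : Fin n} :
    eps n i - eps n j ∈ Nspan S ↔ i ≤ j ∧ HasSimpleRootsBetween S i j := by
  refine ⟨fun hv => ⟨?_, fun k l hk hl hkl => ?_⟩, fun h => eps_sub_eps_mem_Nspan h.1 h.2⟩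
  · by_contra! hji
    have := partialSum_nonneg hS j hv
    norm_num [partialSum_eps, hji.not_ge] at this
  · by_contra hkS
    have := partialSum_eq_zero hS hkl hkS hv
    rw [map_sub, partialSum_eps, partialSum_eps, if_pos hk, if_neg (by omega)] at this
    norm_num at this

lemma eps_sub_eps_mem_Nspan_union_neg_iff {Pp Pm : Set (Fin n → ℝ)}
    (hPp : Pp ⊆ simpleRoots n) (hPm : Pm ⊆ simpleRoots n) {i j : Fin n} :
    eps n i - eps n j ∈ Nspan Pp ∪ -Nspan Pm ↔
      (i ≤ j ∧ HasSimpleRootsBetween Pp i j) ∨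
        (j ≤ i ∧ HasSimpleRootsBetween Pm j i) := by
  rw [Set.mem_union, Set.mem_neg, neg_sub, eps_sub_eps_mem_Nspan_iff hPp,
    eps_sub_eps_mem_Nspan_iff hPm]

lemma isEpsTransitive_Rset {Pp Pm : Set (Fin n → ℝ)} (hPp : Pp ⊆ simpleRoots n)
    (hPm : Pm ⊆ simpleRoots n) : IsEpsTransitive (Rset n Pp Pm) := by
  rintro a b d had ⟨hab, -⟩ ⟨hbd, -⟩
  refine ⟨?_, a, d, had, rfl⟩
  rw [eps_sub_eps_mem_Nspan_union_neg_iff hPp hPm] at hab hbd ⊢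
  rcases hab with ⟨hab, cab⟩ | ⟨hba, cba⟩ <;>
    rcases hbd with ⟨hbd, cbd⟩ | ⟨hdb, cdb⟩
  · exact .inl ⟨hab.trans hbd, cab.trans cbd⟩
  · rcases le_total a d with h | h
    · exact .inl ⟨h, cab.mono le_rfl hdb⟩
    · exact .inr ⟨h, cdb.mono le_rfl hab⟩
  · rcases le_total a d with h | h
    · exact .inl ⟨h, cbd.mono hba le_rfl⟩
    · exact .inr ⟨h, cba.mono hbd le_rfl⟩
  · exact .inr ⟨hdb.trans hba, cdb.trans cba⟩

lemma RstarSet_eq_neg_sdiff (Pp Pm : Set (Fin n → ℝ)) :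
    RstarSet n Pp Pm = -Rset n Pp Pm \ Rset n Pp Pm :=
  Set.sdiff_inter_self_eq_sdiff

theorem statement_5_general (n : ℕ) (Pp Pm : Set (Fin n → ℝ))
    (hPp : Pp ⊆ simpleRoots n) (hPm : Pm ⊆ simpleRoots n) :
    (∀ α β : Fin n → ℝ, α ∈ Rset n Pp Pm → β ∈ Rset n Pp Pm →
      α + β ∈ Delta n → α + β ∈ Rset n Pp Pm) ∧
    (∀ α β : Fin n → ℝ, α ∈ RstarSet n Pp Pm → β ∈ RstarSet n Pp Pm →
      α + β ∈ Delta n → α + β ∈ RstarSet n Pp Pm) := by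
  have hR : Rset n Pp Pm ⊆ Delta n := Set.inter_subset_right
  have htrans := isEpsTransitive_Rset hPp hPm
  have hRstar : -Rset n Pp Pm \ Rset n Pp Pm ⊆ Delta n :=
    Set.sdiff_subset.trans (neg_Delta (n := n) ▸ Set.neg_subset_neg.2 hR)
  refine ⟨htrans.isClosedUnderRootAdd hR, ?_⟩
  rw [RstarSet_eq_neg_sdiff]
  exact (htrans.neg_sdiff hR).isClosedUnderRootAdd hRstar

/-- Section 1.8: both `R` and `R_*` are additively closed in `Δ`. -/
theorem statement_5 (n : ℕ) (hn : 2 ≤ n) (Pp Pm : Set (Fin n → ℝ))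
    (hPp : Pp ⊆ simpleRoots n) (hPm : Pm ⊆ simpleRoots n)
    (hU : Pp ∪ Pm = simpleRoots n) :
    (∀ α β : Fin n → ℝ, α ∈ Rset n Pp Pm → β ∈ Rset n Pp Pm →
      α + β ∈ Delta n → α + β ∈ Rset n Pp Pm) ∧
    (∀ α β : Fin n → ℝ, α ∈ RstarSet n Pp Pm → β ∈ RstarSet n Pp Pm →
      α + β ∈ Delta n → α + β ∈ RstarSet n Pp Pm) :=
  statement_5_general n Pp Pm hPp hPm
end

section
/- Let n ≥ 2 and let π⁺, π⁻ be subsets of the simple roots π of sl_n with π⁺ ∪ π⁻ = π. (a) Let r ≥ 2 and a_1 < a_2 < … < a_r, b_1,…,b_r ∈ [1,n] be such that ε_{a_i} − ε_{b_i} ∈ (−K) ∩ Δ⁺ for each i, and b_{i+1} ≠ a_i for 1 ≤ i ≤ r−1. Then ε_{b_{i+1}} − ε_{a_i} is a root lying in K for all 1 ≤ i ≤ r−1. (b) Let s ≥ 2 and a'_1 < a'_2 < … < a'_s, b'_1,…,b'_s ∈ [1,n] be such that ε_{a'_j} − ε_{b'_j} ∈ (−K) ∩ Δ⁻ for each j,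 and b'_j ≠ a'_{j+1} for 1 ≤ j ≤ s−1. Then ε_{b'_j} − ε_{a'_{j+1}} is a root lying in K for all 1 ≤ j ≤ s−1. (Lemma 9.2: joining straightened edges, whose values ε_{a} − ε_{b} lie in −K.) -/
/-!
A positive root `ε_a - ε_b` (`a < b`) lies in `ℕπ⁺` iff every simple root `α_k`, `a ≤ k < b`,
lies in `π⁺` (pairing with the fundamental coweight `ϖ_k` kills `ℕ(π⁺ ∖ {α_k})` but not
`ε_a - ε_b`), and it is never in `-ℕπ⁻`; so it lies in `K` iff some such `α_k` is missing from
`π⁺`. Likewise `ε_b - ε_a ∈ K` iff some `α_k`, `a ≤ k < b`, is missing from `π⁻`. This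
criterion is monotone in the interval `[a, b]`: since `a_i < a_{i+1} < b_{i+1}`, the missing
simple root witnessing `ε_{b_{i+1}} - ε_{a_{i+1}} ∈ K` also witnesses `ε_{b_{i+1}} - ε_{a_i} ∈ K`,
and dually in part (b).
-/

open Pointwise

section SimpleRootChains

variable {n : ℕ}

def MissesSimpleRoot (S : Set (Fin n → ℝ)) (a b : Fin n) : Prop :=
  ∃ k k' : Fin n, a ≤ k ∧ (k' : ℕ) = k + 1 ∧ k' ≤ b ∧ eps n k - eps n k' ∉ S

variable {S : Set (Fin n → ℝ)}

theorem MissesSimpleRoot.mono {a b a' b' : Fin n}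
    (h : MissesSimpleRoot S a' b') (ha : a ≤ a') (hb : b' ≤ b) : MissesSimpleRoot S a b := by
  obtain ⟨k, k', hk, hk', hkb, hS⟩ := h
  exact ⟨k, k', ha.trans hk, hk', hkb.trans hb, hS⟩

theorem eps_sub_eps_eq_iff {i j i' j' : Fin n} (hij : i ≠ j) :
    eps n i - eps n j = eps n i' - eps n j' ↔ i = i' ∧ j = j' := by
  refine ⟨fun h => ?_, by rintro ⟨rfl, rfl⟩; rfl⟩
  have hi := congrFun h i
  have hj := congrFun h j
  simp only [eps, Pi.sub_apply, Pi.single_apply] at hi hj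
  grind

theorem eps_sub_eps_mem_DeltaPos_iff {i j : Fin n} : eps n i - eps n j ∈ DeltaPos n ↔ i < j := by
  refine ⟨?_, fun h => ⟨i, j, h, rfl⟩⟩
  rintro ⟨p, q, hpq, h⟩
  obtain ⟨rfl, rfl⟩ := (eps_sub_eps_eq_iff hpq.ne).mp h.symm
  exact hpq

theorem eps_sub_eps_mem_DeltaNeg_iff {i j : Fin n} : eps n i - eps n j ∈ DeltaNeg n ↔ j < i := by
  rw [DeltaNeg, Set.mem_neg, neg_sub, eps_sub_eps_mem_DeltaPos_iff]

theorem eps_sub_eps_mem_closure_of_not_missesSimpleRoot {a b : Fin n}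
    (hab : a ≤ b) (h : ¬MissesSimpleRoot S a b) :
    eps n a - eps n b ∈ AddSubmonoid.closure S := by
  simp only [MissesSimpleRoot, not_exists, not_and, not_not] at h
  suffices ∀ m : ℕ, (a : ℕ) ≤ m → ∀ hm : m ≤ b,
      eps n a - eps n ⟨m, hm.trans_lt b.isLt⟩ ∈ AddSubmonoid.closure S from
    this b hab le_rfl
  intro m ham
  induction m, ham using Nat.le_induction with
  | base => intro _; simp
  | succ m ham ih =>
    intro hm
    have hstep := h ⟨m, by omega⟩ ⟨m + 1, by omega⟩ ham rfl hm
    rw [← sub_add_sub_cancel _ (eps n ⟨m, by omega⟩)]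
    exact add_mem (ih (by omega)) (AddSubmonoid.subset_closure hstep)

/-- Pairing with the fundamental coweight `ϖ_m`. -/
noncomputable def prefixSum (m : Fin n) : (Fin n → ℝ) →+ ℝ where
  toFun v := ∑ i ∈ Finset.Iic m, v i
  map_zero' := by simp
  map_add' v w := by simp [Finset.sum_add_distrib]

theorem prefixSum_eps_sub_eps (m i j : Fin n) :
    prefixSum m (eps n i - eps n j) = (if i ≤ m then 1 else 0) - (if j ≤ m then 1 else 0) := by
  simp [prefixSum, eps, Finset.sum_pi_single']

theorem prefixSum_nonneg_of_mem_closure (hS : S ⊆ simpleRoots n) (m : Fin n) {v : Fin n → ℝ}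
    (hv : v ∈ AddSubmonoid.closure S) : 0 ≤ prefixSum m v := by
  induction hv using AddSubmonoid.closure_induction with
  | mem x hx =>
    obtain ⟨i, j, hj, rfl⟩ := hS hx
    rw [prefixSum_eps_sub_eps]
    split_ifs <;> simp only [Fin.le_def] at * <;> first | omega | norm_num
  | zero => simp
  | add x y _ _ hx hy => rw [map_add]; positivity

theorem prefixSum_eq_zero_of_mem_closure (hS : S ⊆ simpleRoots n) {m m' : Fin n}
    (hm' : (m' : ℕ) = m + 1) (hm : eps n m - eps n m' ∉ S) {v : Fin n → ℝ}
    (hv : v ∈ AddSubmonoid.closure S) : prefixSum m v = 0 := by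
  induction hv using AddSubmonoid.closure_induction with
  | mem x hx =>
    obtain ⟨i, j, hj, rfl⟩ := hS hx
    have hi : i ≠ m := by
      rintro rfl
      obtain rfl : j = m' := Fin.ext (by omega)
      exact hm hx
    rw [prefixSum_eps_sub_eps]
    split_ifs <;> simp only [Fin.le_def, ne_eq, Fin.ext_iff] at * <;> first | omega | norm_num
  | zero => simp
  | add x y _ _ hx hy => rw [map_add, hx, hy, add_zero]

theorem eps_sub_eps_notMem_closure_of_missesSimpleRoot (hS : S ⊆ simpleRoots n) {a b : Fin n}
    (h : MissesSimpleRoot S a b) : eps n a - eps n b ∉ AddSubmonoid.closure S := by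
  obtain ⟨k, k', hak, hk', hkb, hk⟩ := h
  intro hv
  have hzero := prefixSum_eq_zero_of_mem_closure hS hk' hk hv
  rw [prefixSum_eps_sub_eps, if_pos hak, if_neg (show ¬b ≤ k by rw [Fin.le_def]; omega)] at hzero
  norm_num at hzero

theorem eps_sub_eps_notMem_closure_of_lt (hS : S ⊆ simpleRoots n) {a b : Fin n} (hab : a < b) :
    eps n b - eps n a ∉ AddSubmonoid.closure S := by
  intro hv
  have hnonneg := prefixSum_nonneg_of_mem_closure hS a hv
  rw [prefixSum_eps_sub_eps, if_neg hab.not_ge, if_pos le_rfl] at hnonneg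
  norm_num at hnonneg

end SimpleRootChains

section RootsInK

variable {n : ℕ} {Pp Pm : Set (Fin n → ℝ)}

theorem eps_sub_eps_mem_Kset_iff_of_lt (hPp : Pp ⊆ simpleRoots n) (hPm : Pm ⊆ simpleRoots n)
    {a b : Fin n} (hab : a < b) : eps n a - eps n b ∈ Kset n Pp Pm ↔ MissesSimpleRoot Pp a b := by
  have hnot_neg : eps n a - eps n b ∉ -Nspan Pm := by
    rw [Set.mem_neg, neg_sub]
    exact eps_sub_eps_notMem_closure_of_lt hPm hab
  constructor
  · rintro ⟨-, hR⟩
    by_contra h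
    exact hR ⟨Or.inl (eps_sub_eps_mem_closure_of_not_missesSimpleRoot hab.le h), ⟨a, b, hab.ne, rfl⟩⟩
  · intro h
    refine ⟨⟨a, b, hab.ne, rfl⟩, ?_⟩
    rintro ⟨hpos | hneg, -⟩
    exacts [eps_sub_eps_notMem_closure_of_missesSimpleRoot hPp h hpos, hnot_neg hneg]

theorem eps_sub_eps_mem_Kset_iff_of_gt (hPp : Pp ⊆ simpleRoots n) (hPm : Pm ⊆ simpleRoots n)
    {a b : Fin n} (hab : a < b) : eps n b - eps n a ∈ Kset n Pp Pm ↔ MissesSimpleRoot Pm a b := by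
  have hmem_neg : eps n b - eps n a ∈ -Nspan Pm ↔ eps n a - eps n b ∈ AddSubmonoid.closure Pm := by
    rw [Set.mem_neg, neg_sub]
    rfl
  constructor
  · rintro ⟨-, hR⟩
    by_contra h
    exact hR ⟨Or.inr (hmem_neg.mpr (eps_sub_eps_mem_closure_of_not_missesSimpleRoot hab.le h)),
      ⟨b, a, hab.ne', rfl⟩⟩
  · intro h
    refine ⟨⟨b, a, hab.ne', rfl⟩, ?_⟩
    rintro ⟨hpos | hneg, -⟩
    exacts [eps_sub_eps_notMem_closure_of_lt hPp hab hpos,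
      eps_sub_eps_notMem_closure_of_missesSimpleRoot hPm h (hmem_neg.mp hneg)]

end RootsInK

theorem statement_15_general (n : ℕ) (Pp Pm : Set (Fin n → ℝ))
    (hPp : Pp ⊆ simpleRoots n) (hPm : Pm ⊆ simpleRoots n) :
    (∀ r : ℕ, 2 ≤ r → ∀ a b : ℕ → Fin n,
      (∀ i, i + 1 < r → a i < a (i + 1)) →
      (∀ i, i < r → eps n (a i) - eps n (b i) ∈ (-Kset n Pp Pm) ∩ DeltaPos n) →
      (∀ i, i + 1 < r → b (i + 1) ≠ a i) →
      ∀ i, i + 1 < r →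
        eps n (b (i + 1)) - eps n (a i) ∈ Delta n ∧
        eps n (b (i + 1)) - eps n (a i) ∈ Kset n Pp Pm) ∧
    (∀ s : ℕ, 2 ≤ s → ∀ a b : ℕ → Fin n,
      (∀ j, j + 1 < s → a j < a (j + 1)) →
      (∀ j, j < s → eps n (a j) - eps n (b j) ∈ (-Kset n Pp Pm) ∩ DeltaNeg n) →
      (∀ j, j + 1 < s → b j ≠ a (j + 1)) →
      ∀ j, j + 1 < s →
        eps n (b j) - eps n (a (j + 1)) ∈ Delta n ∧
        eps n (b j) - eps n (a (j + 1)) ∈ Kset n Pp Pm) := by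
  refine ⟨fun r _ a b ha harc _ i hi => ?_, fun s _ a b ha harc _ j hj => ?_⟩
  · obtain ⟨hK, hpos⟩ := harc (i + 1) hi
    rw [eps_sub_eps_mem_DeltaPos_iff] at hpos
    rw [Set.mem_neg, neg_sub, eps_sub_eps_mem_Kset_iff_of_gt hPp hPm hpos] at hK
    have hK' : eps n (b (i + 1)) - eps n (a i) ∈ Kset n Pp Pm :=
      (eps_sub_eps_mem_Kset_iff_of_gt hPp hPm ((ha i hi).trans hpos)).mpr
        (hK.mono (ha i hi).le le_rfl)
    exact ⟨hK'.1, hK'⟩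
  · obtain ⟨hK, hneg⟩ := harc j (by omega)
    rw [eps_sub_eps_mem_DeltaNeg_iff] at hneg
    rw [Set.mem_neg, neg_sub, eps_sub_eps_mem_Kset_iff_of_lt hPp hPm hneg] at hK
    have hK' : eps n (b j) - eps n (a (j + 1)) ∈ Kset n Pp Pm :=
      (eps_sub_eps_mem_Kset_iff_of_lt hPp hPm (hneg.trans (ha j hj))).mpr
        (hK.mono le_rfl (ha j hj).le)
    exact ⟨hK'.1, hK'⟩

/-- Lemma 9.2: joining straightened edges. (a) Given arcs `ε_{a_i} − ε_{b_i} ∈ (−K) ∩ Δ⁺` with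
`a_1 < … < a_r` and `b_{i+1} ≠ a_i`, each `ε_{b_{i+1}} − ε_{a_i}` is a root lying in `K`.
(b) The analogous statement with `(−K) ∩ Δ⁻` and `ε_{b_j} − ε_{a_{j+1}}`. -/
theorem statement_15 (n : ℕ) (hn : 2 ≤ n) (Pp Pm : Set (Fin n → ℝ))
    (hPp : Pp ⊆ simpleRoots n) (hPm : Pm ⊆ simpleRoots n)
    (hU : Pp ∪ Pm = simpleRoots n) :
    (∀ r : ℕ, 2 ≤ r → ∀ a b : ℕ → Fin n,
      (∀ i, i + 1 < r → a i < a (i + 1)) →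
      (∀ i, i < r → eps n (a i) - eps n (b i) ∈ (-Kset n Pp Pm) ∩ DeltaPos n) →
      (∀ i, i + 1 < r → b (i + 1) ≠ a i) →
      ∀ i, i + 1 < r →
        eps n (b (i + 1)) - eps n (a i) ∈ Delta n ∧
        eps n (b (i + 1)) - eps n (a i) ∈ Kset n Pp Pm) ∧
    (∀ s : ℕ, 2 ≤ s → ∀ a b : ℕ → Fin n,
      (∀ j, j + 1 < s → a j < a (j + 1)) →
      (∀ j, j < s → eps n (a j) - eps n (b j) ∈ (-Kset n Pp Pm) ∩ DeltaNeg n) →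
      (∀ j, j + 1 < s → b j ≠ a (j + 1)) →
      ∀ j, j + 1 < s →
        eps n (b j) - eps n (a (j + 1)) ∈ Delta n ∧
        eps n (b j) - eps n (a (j + 1)) ∈ Kset n Pp Pm) :=
  statement_15_general n Pp Pm hPp hPm
end
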